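/- arXiv:1401.1561 — 3 statements merged into one kernel-verified Lean document; each statement's English description precedes it below -/
import Mathlib

section
/- Define for x, r ∈ ℝ³ with r ≠ x the Coulomb kernel E(p, r) = ‖r − p‖^(-3) • (r − p). Let a, b ∈ ℝ³ and let n = a × b. Then the derivative at h = 0 of the function h ↦ E(x + (h/2) • (n/‖n‖), r) − E(x − (h/2) • (n/‖n‖), r) (assuming n ≠ 0) equals ‖r − x‖^(-3) • ( (3/‖r−x‖²) ⟪r − x, n/‖n‖⟫ • (r − x) − (n/‖n‖) ). -/
/-! The field `w ↦ ‖w‖⁻³ • w` has derivative `‖w‖⁻³ • (h - (3 ⟪w, h⟫ / ‖w‖²) • w)` in the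
direction `h`. The dipole pair is the central difference
`g (h/2) - g (-h/2)` of `g t = coulomb (x + t • u) r`, so its derivative at `0` is `g' 0`. -/

open scoped RealInnerProductSpace

noncomputable def cross3 (a b : EuclideanSpace ℝ (Fin 3)) : EuclideanSpace ℝ (Fin 3) :=
  (WithLp.equiv 2 (Fin 3 → ℝ)).symm
    (crossProduct ((WithLp.equiv 2 (Fin 3 → ℝ)) a) ((WithLp.equiv 2 (Fin 3 → ℝ)) b))

/-- The unit-charge Coulomb field at `r` of a point charge at `p`. -/
noncomputable def coulomb (p r : EuclideanSpace ℝ (Fin 3)) : EuclideanSpace ℝ (Fin 3) :=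
  ‖r - p‖ ^ (-3 : ℤ) • (r - p)

section

variable {E : Type*} [NormedAddCommGroup E] [InnerProductSpace ℝ E] {γ : ℝ → E} {γ' : E} {t : ℝ}

theorem HasDerivAt.norm (hγ : HasDerivAt γ γ' t) (h0 : γ t ≠ 0) :
    HasDerivAt (fun s => ‖γ s‖) (⟪γ t, γ'⟫ / ‖γ t‖) t := by
  have h := hγ.norm_sq.sqrt (by simpa using h0)
  simp only [Real.sqrt_sq (norm_nonneg _)] at h
  convert h using 1
  ring

theorem HasDerivAt.norm_zpow_smul (hγ : HasDerivAt γ γ' t) (h0 : γ t ≠ 0) (n : ℤ) :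
    HasDerivAt (fun s => ‖γ s‖ ^ n • γ s)
      (‖γ t‖ ^ n • γ' + (n * ‖γ t‖ ^ (n - 2) * ⟪γ t, γ'⟫) • γ t) t := by
  have hnorm : ‖γ t‖ ≠ 0 := norm_ne_zero_iff.mpr h0
  have hpow := (hasDerivAt_zpow n ‖γ t‖ (Or.inl hnorm)).comp t (hγ.norm h0)
  rw [Function.comp_def] at hpow
  refine (hpow.smul hγ).congr_deriv ?_
  rw [zpow_sub₀ hnorm n 2, zpow_sub_one₀ hnorm n]
  match_scalars <;> field_simp

end

theorem HasDerivAt.comp_half_sub_comp_neg_half {F : Type*} [NormedAddCommGroup F]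
    [NormedSpace ℝ F] {g : ℝ → F} {g' : F} (hg : HasDerivAt g g' 0) :
    HasDerivAt (fun h : ℝ => g (h / 2) - g (-(h / 2))) g' 0 := by
  have hhalf : HasDerivAt (fun h : ℝ => h / 2) (1 / 2) 0 := (hasDerivAt_id 0).div_const 2
  have h1 : HasDerivAt (fun h : ℝ => g (h / 2)) ((1 / 2 : ℝ) • g') 0 :=
    (show HasDerivAt g g' (0 / 2) by simpa using hg).scomp 0 hhalf
  have h2 : HasDerivAt (fun h : ℝ => g (-(h / 2))) ((-(1 / 2) : ℝ) • g') 0 :=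
    (show HasDerivAt g g' (-(0 / 2)) by simpa using hg).scomp 0 hhalf.neg
  exact (h1.sub h2).congr_deriv (by module)

theorem hasDerivAt_coulomb_add_smul {p r : EuclideanSpace ℝ (Fin 3)} (hrp : r ≠ p)
    (u : EuclideanSpace ℝ (Fin 3)) :
    HasDerivAt (fun t : ℝ => coulomb (p + t • u) r)
      (‖r - p‖ ^ (-3 : ℤ) • (((3 / ‖r - p‖ ^ 2) * ⟪r - p, u⟫) • (r - p) - u)) 0 := by
  have hline : HasDerivAt (fun t : ℝ => r - (p + t • u)) (-u) 0 := by
    simpa using ((hasDerivAt_id (0 : ℝ)).smul_const u).const_add p |>.const_sub r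
  have hrp' : r - p ≠ 0 := sub_ne_zero.mpr hrp
  refine (hline.norm_zpow_smul (by simpa using hrp') (-3)).congr_deriv ?_
  simp only [zero_smul, add_zero, zpow_sub₀ (norm_ne_zero_iff.mpr hrp'), inner_neg_right]
  match_scalars <;> field_simp

theorem stmt3_general (x r a b : EuclideanSpace ℝ (Fin 3)) (hrx : r ≠ x) :
    HasDerivAt
      (fun h : ℝ =>
        coulomb (x + (h / 2) • (‖cross3 a b‖⁻¹ • cross3 a b)) r -
          coulomb (x - (h / 2) • (‖cross3 a b‖⁻¹ • cross3 a b)) r)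
      (‖r - x‖ ^ (-3 : ℤ) •
        (((3 / ‖r - x‖ ^ 2) * ⟪r - x, ‖cross3 a b‖⁻¹ • cross3 a b⟫) • (r - x) -
          ‖cross3 a b‖⁻¹ • cross3 a b)) 0 := by
  simpa only [neg_smul, ← sub_eq_add_neg] using
    (hasDerivAt_coulomb_add_smul hrx (‖cross3 a b‖⁻¹ • cross3 a b)).comp_half_sub_comp_neg_half

theorem stmt3 (x r a b : EuclideanSpace ℝ (Fin 3)) (hrx : r ≠ x)
    (hab : cross3 a b ≠ 0) :
    HasDerivAt
      (fun h : ℝ =>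
        coulomb (x + (h / 2) • (‖cross3 a b‖⁻¹ • cross3 a b)) r -
          coulomb (x - (h / 2) • (‖cross3 a b‖⁻¹ • cross3 a b)) r)
      (‖r - x‖ ^ (-3 : ℤ) •
        (((3 / ‖r - x‖ ^ 2) * ⟪r - x, ‖cross3 a b‖⁻¹ • cross3 a b⟫) • (r - x) -
          ‖cross3 a b‖⁻¹ • cross3 a b)) 0 :=
  stmt3_general x r a b hrx
end

section
/- For vectors a, b, v ∈ ℝ³, the dipole-sheet direction identity holds: 3 ⟪v̂, a × b⟫ • v̂ − (a × b) = 2 (a × b) + 3 ⟪v̂, a⟫ • (b × v̂) − 3 ⟪v̂, b⟫ • (a × v̂), where v̂ is any unit vector. -/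
open scoped RealInnerProductSpace

open Matrix

theorem dotProduct_self_smul_cross {R : Type*} [CommRing R] (a b v : Fin 3 → R) :
    (v ⬝ᵥ v) • a ⨯₃ b = (a ⨯₃ b ⬝ᵥ v) • v + (b ⬝ᵥ v) • a ⨯₃ v - (a ⬝ᵥ v) • b ⨯₃ v := by
  have expand_outer : v ⨯₃ (a ⨯₃ b ⨯₃ v) = (v ⬝ᵥ v) • a ⨯₃ b - (a ⨯₃ b ⬝ᵥ v) • v :=
    cross_cross_eq_smul_sub_smul' v (a ⨯₃ b) v
  have expand_inner : v ⨯₃ (a ⨯₃ b ⨯₃ v) = (b ⬝ᵥ v) • a ⨯₃ v - (a ⬝ᵥ v) • b ⨯₃ v := by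
    rw [cross_cross_eq_smul_sub_smul, map_sub, map_smul, map_smul, ← cross_anticomm a,
      ← cross_anticomm b]
    module
  linear_combination (norm := module) expand_inner - expand_outer

theorem norm_sq_smul_cross3 (a b v : EuclideanSpace ℝ (Fin 3)) :
    ‖v‖ ^ 2 • cross3 a b = ⟪v, cross3 a b⟫ • v + ⟪v, b⟫ • cross3 a v - ⟪v, a⟫ • cross3 b v := by
  have := dotProduct_self_smul_cross a.ofLp b.ofLp v.ofLp
  rw [← real_inner_self_eq_norm_sq]
  ext i
  simp only [cross3, EuclideanSpace.inner_eq_star_dotProduct, star_trivial]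
  simpa using congrFun this i

theorem stmt4 (a b v : EuclideanSpace ℝ (Fin 3)) (hv : ‖v‖ = 1) :
    (3 * ⟪v, cross3 a b⟫) • v - cross3 a b =
      (2 : ℝ) • cross3 a b + (3 * ⟪v, a⟫) • cross3 b v - (3 * ⟪v, b⟫) • cross3 a v := by
  have h := norm_sq_smul_cross3 a b v
  rw [hv, one_pow, one_smul] at h
  linear_combination (norm := module) (-3 : ℝ) • h
end

section
/- Let x, a, b, r ∈ ℝ³ with r ≠ x. Define G : ℝ × ℝ → ℝ³ by G(d, e) = (d • a) × (r − x)/‖r − x‖³ + (e • b) × (r − x − d • a)/‖r − x − d • a‖³ − (d • a) × (r − x − e • b)/‖r − x − e • b‖³ − (e • b) × (r − x)/‖r − x‖³ (the Biot–Savart sum over the four sides of the parallelogram with vertices x, x + d a, x + d a + e b, x + e b). Then the mixed second partial derivative ∂²G/∂d∂e at (0,0) equals ‖r−x‖⁻³ • ( 2 (a × b) + 3 ⟪v̂, a⟫ • (b × v̂) − 3 ⟪v̂, b⟫ • (a × v̂) ) where v̂ = (r − x)/‖r − x‖. -/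
open scoped RealInnerProductSpace

/-- Biot–Savart sum over the four sides of the parallelogram with vertices
`x`, `x + d • a`, `x + d • a + e • b`, `x + e • b`, evaluated at `r`. -/
noncomputable def bsPar (x a b r : EuclideanSpace ℝ (Fin 3)) (d e : ℝ) :
    EuclideanSpace ℝ (Fin 3) :=
  ‖r - x‖ ^ (-3 : ℤ) • cross3 (d • a) (r - x) +
    ‖r - x - d • a‖ ^ (-3 : ℤ) • cross3 (e • b) (r - x - d • a) -
    ‖r - x - e • b‖ ^ (-3 : ℤ) • cross3 (d • a) (r - x - e • b) -
    ‖r - x‖ ^ (-3 : ℤ) • cross3 (e • b) (r - x)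

/-!
For fixed `d`, three of the four terms are affine in `e`, and the remaining one (the side from
`x + e • b` to `x + e • b + d • a`) is `d` times a function of `e` alone. Both derivatives
therefore reduce to the first-order expansion
`‖c - t • v‖⁻³ = ‖c‖⁻³ + 3 t ‖c‖⁻⁵ ⟪c, v⟫ + o(t)`, applied with `c = r - x` and `v = a` or `v = b`.
-/

section LineNorm
variable {E : Type*} [NormedAddCommGroup E] [InnerProductSpace ℝ E]
variable {F : Type*} [NormedAddCommGroup F] [NormedSpace ℝ F]

theorem hasDerivAt_smul_const_self (u : F) (t₀ : ℝ) : HasDerivAt (fun t : ℝ => t • u) u t₀ := by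
  simpa using (hasDerivAt_id t₀).smul_const u

theorem hasDerivAt_norm_sub_smul {c : E} (hc : c ≠ 0) (v : E) :
    HasDerivAt (fun t : ℝ => ‖c - t • v‖) (-(⟪c, v⟫ / ‖c‖)) 0 := by
  have := ((hasDerivAt_smul_const_self v 0).const_sub c).norm_sq.sqrt (by simpa using hc)
  simp only [Real.sqrt_sq (norm_nonneg _)] at this
  convert this using 1
  simp
  field_simp

theorem hasDerivAt_norm_sub_smul_zpow {c : E} (hc : c ≠ 0) (v : E) (n : ℤ) :
    HasDerivAt (fun t : ℝ => ‖c - t • v‖ ^ n) (-(n * ‖c‖ ^ (n - 2) * ⟪c, v⟫)) 0 := by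
  have hnc : ‖c‖ ≠ 0 := norm_ne_zero_iff.mpr hc
  refine ((hasDerivAt_zpow n ‖c‖ (Or.inl hnc)).comp_of_eq 0 (hasDerivAt_norm_sub_smul hc v)
    (by simp)).congr_deriv ?_
  rw [show n - 2 = n - 1 - 1 by ring, zpow_sub_one₀ hnc (n - 1)]
  field_simp

theorem hasDerivAt_norm_sub_smul_zpow_smul {c : E} (hc : c ≠ 0) (v : E) (n : ℤ) (u z : F) :
    HasDerivAt (fun t : ℝ => ‖c - t • v‖ ^ n • (u - t • z))
      ((-(n * ‖c‖ ^ (n - 2) * ⟪c, v⟫)) • u - ‖c‖ ^ n • z) 0 := by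
  refine ((hasDerivAt_norm_sub_smul_zpow hc v n).smul
    ((hasDerivAt_smul_const_self z 0).const_sub u)).congr_deriv ?_
  simp only [zero_smul, sub_zero, smul_neg]
  abel

theorem hasDerivAt_norm_sub_smul_zpow_neg_three_smul {c : E} (hc : c ≠ 0) (v : E) (u z : F) :
    HasDerivAt (fun t : ℝ => ‖c - t • v‖ ^ (-3 : ℤ) • (u - t • z))
      ((3 * ‖c‖ ^ (-5 : ℤ) * ⟪c, v⟫) • u - ‖c‖ ^ (-3 : ℤ) • z) 0 := by
  convert hasDerivAt_norm_sub_smul_zpow_smul hc v (-3) u z using 3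
  norm_num

end LineNorm

theorem cross3_smul_left (s : ℝ) (a b : EuclideanSpace ℝ (Fin 3)) :
    cross3 (s • a) b = s • cross3 a b := by
  simp only [cross3, WithLp.equiv_apply, WithLp.ofLp_smul, map_smul, LinearMap.smul_apply,
    WithLp.equiv_symm_apply, WithLp.toLp_smul]

theorem cross3_smul_right (s : ℝ) (a b : EuclideanSpace ℝ (Fin 3)) :
    cross3 a (s • b) = s • cross3 a b := by
  simp only [cross3, WithLp.equiv_apply, WithLp.ofLp_smul, map_smul, WithLp.equiv_symm_apply,
    WithLp.toLp_smul]

theorem cross3_sub_right (a b c : EuclideanSpace ℝ (Fin 3)) :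
    cross3 a (b - c) = cross3 a b - cross3 a c := by
  simp only [cross3, WithLp.equiv_apply, WithLp.ofLp_sub, map_sub, WithLp.equiv_symm_apply,
    WithLp.toLp_sub]

theorem cross3_anticomm (a b : EuclideanSpace ℝ (Fin 3)) : cross3 b a = -cross3 a b := by
  rw [cross3, ← cross_anticomm, WithLp.equiv_symm_apply, WithLp.toLp_neg, cross3]
  rfl

theorem cross3_sub_smul_right (a b c : EuclideanSpace ℝ (Fin 3)) (t : ℝ) :
    cross3 a (b - t • c) = cross3 a b - t • cross3 a c := by
  rw [cross3_sub_right, cross3_smul_right]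

section BiotSavart
variable (x a b r : EuclideanSpace ℝ (Fin 3))

theorem bsPar_eq (d e : ℝ) :
    bsPar x a b r d e =
      d • (‖r - x‖ ^ (-3 : ℤ) • cross3 a (r - x)) +
        e • (‖r - x - d • a‖ ^ (-3 : ℤ) • cross3 b (r - x - d • a)) -
        d • (‖r - x - e • b‖ ^ (-3 : ℤ) • (cross3 a (r - x) - e • cross3 a b)) -
        e • (‖r - x‖ ^ (-3 : ℤ) • cross3 b (r - x)) := by
  simp only [bsPar, cross3_smul_left, cross3_sub_smul_right]
  module

variable {x r}

theorem hasDerivAt_bsPar_snd (hrx : r ≠ x) (d : ℝ) :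
    HasDerivAt (bsPar x a b r d)
      (‖r - x - d • a‖ ^ (-3 : ℤ) • (cross3 b (r - x) - d • cross3 b a) -
        d • ((3 * ‖r - x‖ ^ (-5 : ℤ) * ⟪r - x, b⟫) • cross3 a (r - x) -
          ‖r - x‖ ^ (-3 : ℤ) • cross3 a b) -
        ‖r - x‖ ^ (-3 : ℤ) • cross3 b (r - x)) 0 := by
  have hw : r - x ≠ 0 := sub_ne_zero.mpr hrx
  rw [show bsPar x a b r d = _ from funext (bsPar_eq x a b r d), ← cross3_sub_smul_right]
  refine ((((hasDerivAt_const (0 : ℝ) (d • (‖r - x‖ ^ (-3 : ℤ) • cross3 a (r - x)))).add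
    (hasDerivAt_smul_const_self (‖r - x - d • a‖ ^ (-3 : ℤ) • cross3 b (r - x - d • a)) 0)).sub
    ((hasDerivAt_norm_sub_smul_zpow_neg_three_smul hw b (cross3 a (r - x)) (cross3 a b)).const_smul
      d)).sub (hasDerivAt_smul_const_self (‖r - x‖ ^ (-3 : ℤ) • cross3 b (r - x)) 0)).congr_deriv ?_
  rw [zero_add]

theorem hasDerivAt_deriv_bsPar_snd (hrx : r ≠ x) :
    HasDerivAt (fun d : ℝ => deriv (bsPar x a b r d) 0)
      ((3 * ‖r - x‖ ^ (-5 : ℤ) * ⟪r - x, a⟫) • cross3 b (r - x) - ‖r - x‖ ^ (-3 : ℤ) • cross3 b a -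
        ((3 * ‖r - x‖ ^ (-5 : ℤ) * ⟪r - x, b⟫) • cross3 a (r - x) -
          ‖r - x‖ ^ (-3 : ℤ) • cross3 a b)) 0 := by
  have hw : r - x ≠ 0 := sub_ne_zero.mpr hrx
  rw [show (fun d : ℝ => deriv (bsPar x a b r d) 0) = _ from
    funext fun d => (hasDerivAt_bsPar_snd a b hrx d).deriv]
  refine (((hasDerivAt_norm_sub_smul_zpow_neg_three_smul hw a (cross3 b (r - x))
    (cross3 b a)).sub (hasDerivAt_smul_const_self
      ((3 * ‖r - x‖ ^ (-5 : ℤ) * ⟪r - x, b⟫) • cross3 a (r - x) -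
          ‖r - x‖ ^ (-3 : ℤ) • cross3 a b) 0)).sub
    (hasDerivAt_const (0 : ℝ) (‖r - x‖ ^ (-3 : ℤ) • cross3 b (r - x)))).congr_deriv ?_
  rw [sub_zero]

end BiotSavart

theorem stmt12 (x a b r : EuclideanSpace ℝ (Fin 3)) (hrx : r ≠ x) :
    deriv (fun d : ℝ => deriv (fun e : ℝ => bsPar x a b r d e) 0) 0 =
      ‖r - x‖ ^ (-3 : ℤ) •
        ((2 : ℝ) • cross3 a b +
          (3 * ⟪‖r - x‖⁻¹ • (r - x), a⟫) • cross3 b (‖r - x‖⁻¹ • (r - x)) -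
          (3 * ⟪‖r - x‖⁻¹ • (r - x), b⟫) • cross3 a (‖r - x‖⁻¹ • (r - x))) := by
  have hnw : ‖r - x‖ ≠ 0 := norm_ne_zero_iff.mpr (sub_ne_zero.mpr hrx)
  rw [(hasDerivAt_deriv_bsPar_snd a b hrx).deriv, cross3_anticomm b a, cross3_smul_right,
    cross3_smul_right, real_inner_smul_left, real_inner_smul_left]
  have hpow : ‖r - x‖ ^ (-5 : ℤ) = ‖r - x‖ ^ (-3 : ℤ) * ‖r - x‖⁻¹ * ‖r - x‖⁻¹ := by
    rw [mul_assoc, ← zpow_neg_one, ← zpow_add₀ hnw, ← zpow_add₀ hnw]; norm_num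
  rw [hpow]
  module
end
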